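/- arXiv:2002.03649 — 3 statements merged into one kernel-verified Lean document; each statement's English description precedes it below -/
import Mathlib

section
/- If G is a path or a cycle on n vertices, then G has an acyclic matching of size at least (n-2)/2. -/
/-!
Work in `Fin n` and take the edges `{2i, 2i+1}` for `i < ⌊(n-1)/2⌋`. They form a matching of the
path, and they avoid the last vertex `n - 1`. Away from that vertex the cycle has exactly the edges
of the path, and the path is a forest since each edge `{i, i+1}` separates `{0, …, i}` from the
rest. So the matching is acyclic in both graphs, and it transports along the isomorphism.
-/

open SimpleGraph

/-- `M` is a matching in `G`: a set of edges of `G`, pairwise disjoint. -/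
def IsMatchingSet {V : Type*} (G : SimpleGraph V) (M : Finset (Sym2 V)) : Prop :=
  (∀ e ∈ M, e ∈ G.edgeSet) ∧
    ∀ e ∈ M, ∀ f ∈ M, e ≠ f → ∀ v : V, v ∈ e → v ∉ f

/-- The set of vertices incident to an edge of `M`. -/
def mVerts {V : Type*} (M : Finset (Sym2 V)) : Set V := {v | ∃ e ∈ M, v ∈ e}

/-- `M` is an acyclic matching in `G`: the subgraph induced by the covered vertices
is a forest. -/
def IsAcyclicMatching {V : Type*} (G : SimpleGraph V) (M : Finset (Sym2 V)) : Prop :=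
  IsMatchingSet G M ∧ (G.induce (mVerts M)).IsAcyclic

/-- `M` is an induced matching in `G`: the subgraph induced by the covered vertices
is 1-regular, i.e. every edge between covered vertices belongs to `M`. -/
def IsInducedMatching {V : Type*} (G : SimpleGraph V) (M : Finset (Sym2 V)) : Prop :=
  IsMatchingSet G M ∧ ∀ v w : V, v ∈ mVerts M → w ∈ mVerts M → G.Adj v w → s(v, w) ∈ M

namespace SimpleGraph

theorem pathGraph_isBridge_of_succ {n : ℕ} {u v : Fin n} (huv : u.val + 1 = v.val) :
    (pathGraph n).IsBridge s(u, v) := by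
  rw [isBridge_iff]
  rintro ⟨p⟩
  obtain ⟨d, -, ha, hb⟩ := p.exists_boundary_dart (Set.Iic u) Set.self_mem_Iic
    (by rw [Set.mem_Iic, Fin.le_def]; omega)
  have hadj := d.adj
  rw [Set.mem_Iic, Fin.le_def] at ha hb
  rw [deleteEdges_adj, pathGraph_adj, Set.mem_singleton_iff] at hadj
  obtain ⟨hadj | hadj, hne⟩ := hadj
  · apply hne
    rw [Fin.ext (by omega : d.fst.val = u.val), Fin.ext (by omega : d.snd.val = v.val)]
  · omega

theorem pathGraph_isAcyclic (n : ℕ) : (pathGraph n).IsAcyclic := by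
  refine isAcyclic_iff_forall_adj_isBridge.mpr fun u v huv ↦ ?_
  rcases pathGraph_adj.mp huv with h | h
  · exact pathGraph_isBridge_of_succ h
  · exact Sym2.eq_swap ▸ pathGraph_isBridge_of_succ h

theorem cycleGraph_adj_iff_pathGraph_adj {n : ℕ} {u v : Fin n} (hu : u.val + 1 < n)
    (hv : v.val + 1 < n) : (cycleGraph n).Adj u v ↔ (pathGraph n).Adj u v := by
  refine ⟨fun h ↦ ?_, fun h ↦ pathGraph_le_cycleGraph h⟩
  have hne := h.ne
  rw [cycleGraph_adj'] at h
  rw [pathGraph_adj]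
  rcases hne.lt_or_gt with hlt | hlt <;>
  · have h₁ := Fin.coe_sub_iff_lt.mpr hlt
    have h₂ := Fin.coe_sub_iff_le.mpr hlt.le
    rw [Fin.lt_def] at hlt
    omega

theorem isAcyclic_induce_cycleGraph {n : ℕ} {s : Set (Fin n)} (hs : ∀ v ∈ s, v.val + 1 < n) :
    ((cycleGraph n).induce s).IsAcyclic := by
  have : (cycleGraph n).induce s = (pathGraph n).induce s := by
    ext u v
    exact cycleGraph_adj_iff_pathGraph_adj (hs u u.2) (hs v v.2)
  exact this ▸ (pathGraph_isAcyclic n).induce s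

end SimpleGraph

section map

variable {V W : Type*}

theorem IsMatchingSet.mono {G G' : SimpleGraph V} {M : Finset (Sym2 V)} (hle : G ≤ G')
    (hM : IsMatchingSet G M) : IsMatchingSet G' M :=
  ⟨fun e he ↦ edgeSet_mono hle (hM.1 e he), hM.2⟩

theorem mVerts_map (f : V ↪ W) (M : Finset (Sym2 V)) :
    mVerts (M.map f.sym2Map) = f '' mVerts M := by
  ext w
  simp only [mVerts, Finset.mem_map, Function.Embedding.sym2Map_apply, Set.mem_image]
  constructor
  · rintro ⟨_, ⟨e, he, rfl⟩, hw⟩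
    obtain ⟨v, hv, rfl⟩ := Sym2.mem_map.mp hw
    exact ⟨v, ⟨e, he, hv⟩, rfl⟩
  · rintro ⟨v, ⟨e, he, hv⟩, rfl⟩
    exact ⟨_, ⟨e, he, rfl⟩, Sym2.mem_map.mpr ⟨v, hv, rfl⟩⟩

theorem IsAcyclicMatching.map {G : SimpleGraph V} {H : SimpleGraph W} {M : Finset (Sym2 V)}
    (e : G ≃g H) (hM : IsAcyclicMatching G M) :
    IsAcyclicMatching H (M.map e.toEquiv.toEmbedding.sym2Map) := by
  obtain ⟨⟨hedges, hdisj⟩, hacyc⟩ := hM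
  refine ⟨⟨?_, ?_⟩, ?_⟩
  · simp only [Finset.mem_map, Function.Embedding.sym2Map_apply, forall_exists_index, and_imp]
    rintro _ f hf rfl
    exact e.map_mem_edgeSet_iff.mpr (hedges f hf)
  · simp only [Finset.mem_map, Function.Embedding.sym2Map_apply, forall_exists_index, and_imp]
    rintro _ f hf rfl _ g hg rfl hfg w hwf hwg
    obtain ⟨v, hvf, rfl⟩ := Sym2.mem_map.mp hwf
    obtain ⟨v', hvg, hvv'⟩ := Sym2.mem_map.mp hwg
    rw [e.injective hvv'] at hvg
    exact hdisj f hf g hg (fun h ↦ hfg (h ▸ rfl)) v hvf hvg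
  · rw [mVerts_map]
    have hmaps : Set.MapsTo e.symm (e '' mVerts M) (mVerts M) := by
      rintro _ ⟨v, hv, rfl⟩
      simpa using hv
    exact hacyc.comap (induceHom e.symm.toHom hmaps)
      (induceHom_injective _ _ e.symm.injective.injOn)

end map

def consecutivePairs (n k : ℕ) (hk : 2 * k ≤ n) : Finset (Sym2 (Fin n)) :=
  Finset.univ.image fun i : Fin k ↦ s(⟨2 * i, by omega⟩, ⟨2 * i + 1, by omega⟩)

section consecutivePairs

variable {n k : ℕ} (hk : 2 * k ≤ n)

theorem mem_consecutivePairs {e : Sym2 (Fin n)} :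
    e ∈ consecutivePairs n k hk ↔ ∃ i : Fin k, s(⟨2 * i, by omega⟩, ⟨2 * i + 1, by omega⟩) = e := by
  simp [consecutivePairs]

theorem card_consecutivePairs : (consecutivePairs n k hk).card = k := by
  refine (Finset.card_image_of_injective _ fun i j h ↦ ?_).trans (Finset.card_fin k)
  simp only [Sym2.eq_iff, Fin.ext_iff] at h
  omega

theorem isMatchingSet_consecutivePairs : IsMatchingSet (pathGraph n) (consecutivePairs n k hk) := by
  simp only [IsMatchingSet, mem_consecutivePairs, forall_exists_index]
  refine ⟨?_, ?_⟩
  · rintro _ i rfl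
    simp [pathGraph_adj]
  · rintro _ i rfl _ j rfl hij v hvi hvj
    simp only [Sym2.mem_iff, Fin.ext_iff] at hvi hvj
    obtain rfl : i = j := Fin.ext (by omega)
    exact hij rfl

theorem val_lt_of_mem_mVerts_consecutivePairs {v : Fin n}
    (hv : v ∈ mVerts (consecutivePairs n k hk)) : v.val < 2 * k := by
  obtain ⟨_, he, hve⟩ := hv
  obtain ⟨i, rfl⟩ := (mem_consecutivePairs hk).mp he
  simp only [Sym2.mem_iff, Fin.ext_iff] at hve
  omega

end consecutivePairs

theorem exists_isAcyclicMatching_of_pathGraph_le_of_le_cycleGraph {n : ℕ}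
    {H : SimpleGraph (Fin n)} (hpath : pathGraph n ≤ H) (hcycle : H ≤ cycleGraph n) :
    ∃ M : Finset (Sym2 (Fin n)), IsAcyclicMatching H M ∧ M.card = (n - 1) / 2 := by
  have hk : 2 * ((n - 1) / 2) ≤ n := by omega
  refine ⟨consecutivePairs n _ hk, ⟨(isMatchingSet_consecutivePairs hk).mono hpath, ?_⟩,
    card_consecutivePairs hk⟩
  refine (isAcyclic_induce_cycleGraph fun v hv ↦ ?_).anti fun _ _ h ↦ hcycle h
  have := val_lt_of_mem_mVerts_consecutivePairs hk hv
  omega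

theorem path_or_cycle_acyclicMatching_general {V : Type*} (G : SimpleGraph V) (n : ℕ)
    (h : Nonempty (G ≃g SimpleGraph.pathGraph n) ∨ Nonempty (G ≃g SimpleGraph.cycleGraph n)) :
    ∃ M : Finset (Sym2 V), IsAcyclicMatching G M ∧ ((n : ℝ) - 2) / 2 ≤ M.card := by
  obtain ⟨H, hpath, hcycle, ⟨e⟩⟩ : ∃ H : SimpleGraph (Fin n),
      pathGraph n ≤ H ∧ H ≤ cycleGraph n ∧ Nonempty (G ≃g H) := by
    rcases h with he | he
    · exact ⟨_, le_rfl, pathGraph_le_cycleGraph, he⟩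
    · exact ⟨_, pathGraph_le_cycleGraph, le_rfl, he⟩
  obtain ⟨M, hM, hcard⟩ := exists_isAcyclicMatching_of_pathGraph_le_of_le_cycleGraph hpath hcycle
  refine ⟨_, hM.map e.symm, ?_⟩
  have hn : (n : ℝ) ≤ 2 * ((n - 1) / 2 : ℕ) + 2 := by exact_mod_cast (by omega)
  rw [Finset.card_map, hcard]
  linarith

theorem path_or_cycle_acyclicMatching {V : Type*} [Fintype V] (G : SimpleGraph V) (n : ℕ)
    (hn : Fintype.card V = n)
    (h : Nonempty (G ≃g SimpleGraph.pathGraph n) ∨ Nonempty (G ≃g SimpleGraph.cycleGraph n)) :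
    ∃ M : Finset (Sym2 V), IsAcyclicMatching G M ∧ ((n : ℝ) - 2) / 2 ≤ M.card :=
  path_or_cycle_acyclicMatching_general G n h
end

section
/- Every graph G with m edges and maximum degree at most Δ ≥ 1 has an acyclic matching of size at least m/Δ². -/
open SimpleGraph

/-!
Let `M` be an inclusion-maximal acyclic matching and `S` its set of `2|M|` vertices; every vertex
of `S` has its partner in `S`. If an edge `xy` misses `S`, then `M + xy` is not acyclic, and as a
vertex of a cycle has two neighbours on it, `x` and `y` have at least two neighbours in `S`
between them. Charging each edge inside `V ∖ S` to these neighbours gives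
`∑_{u ∉ S} deg u ≤ Δ · e(S, V ∖ S)`, hence `2m ≤ ∑_{v ∈ S} (d_S v + (Δ + 1) d_{V∖S} v) ≤ |S| Δ²`,
using `d_S v ≥ 1` and `d_S v + d_{V∖S} v ≤ Δ`.
-/

open Finset

namespace SimpleGraph

variable {V : Type*} {G : SimpleGraph V}

theorem isAcyclic_induce_iff {s : Set V} :
    (G.induce s).IsAcyclic ↔ ∀ ⦃u⦄ (c : G.Walk u u), c.IsCycle → ∃ w ∈ c.support, w ∉ s := by
  have hφ : Function.Injective (Embedding.induce (G := G) s).toHom :=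
    (Embedding.induce (G := G) s).injective
  refine ⟨fun hs u c hc => ?_, fun h u c hc => ?_⟩
  · by_contra! hsub
    refine hs (c.induce s hsub) ((Walk.isCycle_map_iff_of_injective hφ).mp ?_)
    rwa [Walk.map_induce]
  · obtain ⟨w, hw, hws⟩ := h _ (hc.map hφ)
    rw [Walk.support_map, List.mem_map] at hw
    obtain ⟨w, -, rfl⟩ := hw
    exact hws w.2

theorem IsAcyclic.induce_insert {s : Set V} {v : V} (hs : (G.induce s).IsAcyclic)
    (hv : (s ∩ G.neighborSet v).Subsingleton) : (G.induce (insert v s)).IsAcyclic := by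
  classical
  rw [isAcyclic_induce_iff] at hs ⊢
  intro u c hc
  by_contra! hsub
  by_cases hvc : v ∈ c.support
  · have hd := hc.rotate hvc
    have mem : ∀ i, G.Adj v ((c.rotate v hvc).getVert i) →
        (c.rotate v hvc).getVert i ∈ s ∩ G.neighborSet v := by
      intro i hadj
      refine ⟨(hsub _ ?_).resolve_left hadj.ne', hadj⟩
      exact (Walk.mem_support_rotate_iff _ _ _).mp (Walk.getVert_mem_support _ _)
    exact hd.snd_ne_penultimate (hv (mem _ (Walk.adj_snd hd.not_nil))
      (mem _ (Walk.adj_penultimate hd.not_nil).symm))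
  · obtain ⟨w, hw, hws⟩ := hs c hc
    exact hws ((hsub w hw).resolve_left (ne_of_mem_of_not_mem hw hvc))

theorem IsAcyclic.induce_insert_insert {s : Set V} {x y : V} (hs : (G.induce s).IsAcyclic)
    (hx : (s ∩ G.neighborSet x).Subsingleton) (hy : s ∩ G.neighborSet y = ∅) :
    (G.induce (insert x (insert y s))).IsAcyclic := by
  rw [Set.insert_comm]
  refine (hs.induce_insert hx).induce_insert ((Set.subsingleton_singleton (a := x)).anti ?_)
  rintro w ⟨rfl | hw, hyw⟩
  · rfl
  · exact (Set.eq_empty_iff_forall_notMem.mp hy w ⟨hw, hyw⟩).elim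

section Counting

variable [DecidableRel G.Adj]

theorem sum_sum_filter_adj_comm {β : Type*} [AddCommMonoid β] (S T : Finset V) (g : V → V → β) :
    ∑ u ∈ T, ∑ w ∈ S with G.Adj u w, g u w = ∑ w ∈ S, ∑ u ∈ T with G.Adj w u, g u w := by
  simp only [sum_filter]
  rw [sum_comm]
  refine sum_congr rfl fun w _ => sum_congr rfl fun u _ => ?_
  simp only [G.adj_comm u w]

theorem sum_card_filter_adj_comm (S T : Finset V) :
    ∑ u ∈ T, #{w ∈ S | G.Adj u w} = ∑ v ∈ S, #{w ∈ T | G.Adj v w} := by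
  simpa only [card_eq_sum_ones] using sum_sum_filter_adj_comm S T fun _ _ => 1

theorem sum_card_filter_adj_le_sum_card_filter_adj_mul (T : Finset V) (f : V → ℕ)
    (hf : ∀ x ∈ T, ∀ y ∈ T, G.Adj x y → 2 ≤ f x + f y) :
    ∑ u ∈ T, #{w ∈ T | G.Adj u w} ≤ ∑ u ∈ T, #{w ∈ T | G.Adj u w} * f u := by
  have hswap : ∑ u ∈ T, ∑ w ∈ T with G.Adj u w, f w = ∑ u ∈ T, #{w ∈ T | G.Adj u w} * f u := by
    rw [sum_sum_filter_adj_comm]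
    simp only [sum_const, smul_eq_mul]
  suffices 2 * ∑ u ∈ T, #{w ∈ T | G.Adj u w} ≤ 2 * ∑ u ∈ T, #{w ∈ T | G.Adj u w} * f u by
    omega
  calc 2 * ∑ u ∈ T, #{w ∈ T | G.Adj u w} = ∑ u ∈ T, ∑ w ∈ T with G.Adj u w, 2 := by
        simp only [sum_const, smul_eq_mul, mul_sum, mul_comm]
    _ ≤ ∑ u ∈ T, ∑ w ∈ T with G.Adj u w, (f u + f w) := by
        refine sum_le_sum fun u hu => sum_le_sum fun w hw => ?_
        rw [mem_filter] at hw
        exact hf u hu w hw.1 hw.2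
    _ = 2 * ∑ u ∈ T, #{w ∈ T | G.Adj u w} * f u := by
        simp only [sum_add_distrib, hswap, sum_const, smul_eq_mul]
        ring

variable [Fintype V] [DecidableEq V]

theorem degree_eq_card_filter_adj_add_card_filter_adj_compl (S : Finset V) (v : V) :
    G.degree v = #{w ∈ S | G.Adj v w} + #{w ∈ Sᶜ | G.Adj v w} := by
  rw [← card_union_of_disjoint (disjoint_compl_right.mono (filter_subset _ _) (filter_subset _ _)),
    ← filter_union, union_compl, ← neighborFinset_eq_filter, card_neighborFinset_eq_degree]

variable {Δ : ℕ}

theorem sum_degree_compl_le_mul_sum_card_filter_adj (S : Finset V) (hdeg : ∀ v, G.degree v ≤ Δ)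
    (hS : ∀ x ∉ S, ∀ y ∉ S, G.Adj x y → 2 ≤ #{w ∈ S | G.Adj x w} + #{w ∈ S | G.Adj y w}) :
    ∑ u ∈ Sᶜ, G.degree u ≤ Δ * ∑ u ∈ Sᶜ, #{w ∈ S | G.Adj u w} := by
  have hcharge := sum_card_filter_adj_le_sum_card_filter_adj_mul (G := G) Sᶜ
    (fun u => #{w ∈ S | G.Adj u w}) fun x hx y hy => hS x (mem_compl.mp hx) y (mem_compl.mp hy)
  calc ∑ u ∈ Sᶜ, G.degree u
      = ∑ u ∈ Sᶜ, #{w ∈ S | G.Adj u w} + ∑ u ∈ Sᶜ, #{w ∈ Sᶜ | G.Adj u w} := by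
        simp only [degree_eq_card_filter_adj_add_card_filter_adj_compl S, sum_add_distrib]
    _ ≤ ∑ u ∈ Sᶜ, (#{w ∈ Sᶜ | G.Adj u w} + 1) * #{w ∈ S | G.Adj u w} := by
        simp only [add_mul, one_mul, sum_add_distrib]
        omega
    _ ≤ ∑ u ∈ Sᶜ, Δ * #{w ∈ S | G.Adj u w} := by
        refine sum_le_sum fun u _ => ?_
        rcases Nat.eq_zero_or_pos #{w ∈ S | G.Adj u w} with h | h
        · simp [h]
        · have := hdeg u
          rw [degree_eq_card_filter_adj_add_card_filter_adj_compl S] at this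
          exact Nat.mul_le_mul_right _ (by omega)
    _ = Δ * ∑ u ∈ Sᶜ, #{w ∈ S | G.Adj u w} := mul_sum .. |>.symm

theorem two_mul_card_edgeFinset_le_card_mul_sq (S : Finset V) (hdeg : ∀ v, G.degree v ≤ Δ)
    (hS : ∀ v ∈ S, ∃ w ∈ S, G.Adj v w)
    (hSc : ∀ x ∉ S, ∀ y ∉ S, G.Adj x y → 2 ≤ #{w ∈ S | G.Adj x w} + #{w ∈ S | G.Adj y w}) :
    2 * #G.edgeFinset ≤ #S * Δ ^ 2 :=
  calc 2 * #G.edgeFinset = ∑ v ∈ S, G.degree v + ∑ u ∈ Sᶜ, G.degree u := by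
        rw [← sum_degrees_eq_twice_card_edges, sum_add_sum_compl]
    _ ≤ ∑ v ∈ S, G.degree v + Δ * ∑ v ∈ S, #{w ∈ Sᶜ | G.Adj v w} := by
        rw [← sum_card_filter_adj_comm]
        exact Nat.add_le_add_left (sum_degree_compl_le_mul_sum_card_filter_adj S hdeg hSc) _
    _ = ∑ v ∈ S, (#{w ∈ S | G.Adj v w} + (Δ + 1) * #{w ∈ Sᶜ | G.Adj v w}) := by
        simp only [degree_eq_card_filter_adj_add_card_filter_adj_compl S, mul_sum,
          ← sum_add_distrib]
        exact sum_congr rfl fun v _ => by ring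
    _ ≤ ∑ v ∈ S, Δ ^ 2 := by
        refine sum_le_sum fun v hv => ?_
        have hpartner : 1 ≤ #{w ∈ S | G.Adj v w} := by
          obtain ⟨w, hw, hvw⟩ := hS v hv
          exact card_pos.mpr ⟨w, mem_filter.mpr ⟨hw, hvw⟩⟩
        have hdeg_v := hdeg v
        rw [degree_eq_card_filter_adj_add_card_filter_adj_compl S] at hdeg_v
        nlinarith
    _ = #S * Δ ^ 2 := by rw [sum_const, smul_eq_mul]

end Counting

end SimpleGraph

section Matching

variable {V : Type*} {G : SimpleGraph V}

theorem mVerts_insert_mk [DecidableEq V] (M : Finset (Sym2 V)) (x y : V) :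
    mVerts (insert s(x, y) M) = insert x (insert y (mVerts M)) := by
  ext v
  simp [mVerts, or_assoc]

theorem coe_biUnion_toFinset [DecidableEq V] (M : Finset (Sym2 V)) :
    (↑(M.biUnion Sym2.toFinset) : Set V) = mVerts M := by
  ext v
  simp [mVerts]

theorem card_biUnion_toFinset_le [DecidableEq V] (M : Finset (Sym2 V)) :
    #(M.biUnion Sym2.toFinset) ≤ 2 * #M := by
  rw [mul_comm]
  refine card_biUnion_le_card_mul _ _ _ fun e _ => ?_
  rw [Sym2.card_toFinset]
  split_ifs <;> omega

theorem IsMatchingSet.insert [DecidableEq V] {M : Finset (Sym2 V)} (hM : IsMatchingSet G M)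
    {x y : V} (hxy : G.Adj x y) (hx : x ∉ mVerts M) (hy : y ∉ mVerts M) :
    IsMatchingSet G (insert s(x, y) M) := by
  have hnew : ∀ f ∈ M, ∀ v, v ∈ s(x, y) → v ∉ f := by
    rintro f hf v hv hvf
    rcases Sym2.mem_iff.mp hv with rfl | rfl
    exacts [hx ⟨f, hf, hvf⟩, hy ⟨f, hf, hvf⟩]
  simp only [IsMatchingSet, mem_insert] at hM ⊢
  refine ⟨?_, ?_⟩
  · rintro e (rfl | he)
    exacts [hxy, hM.1 e he]
  rintro e (rfl | he) f (rfl | hf) hef v hve hvf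
  · exact hef rfl
  · exact hnew f hf v hve hvf
  · exact hnew e he v hvf hve
  · exact hM.2 e he f hf hef v hve hvf

theorem IsMatchingSet.exists_adj {M : Finset (Sym2 V)} (hM : IsMatchingSet G M) {v : V}
    (hv : v ∈ mVerts M) : ∃ w ∈ mVerts M, G.Adj v w := by
  obtain ⟨e, he, hve⟩ := hv
  obtain ⟨w, rfl⟩ := Sym2.mem_iff_exists.mp hve
  exact ⟨w, ⟨_, he, Sym2.mem_mk_right v w⟩, hM.1 _ he⟩

theorem isAcyclicMatching_empty : IsAcyclicMatching G ∅ :=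
  ⟨⟨by simp, by simp⟩, isAcyclic_induce_iff.mpr fun u c _ =>
    ⟨u, c.start_mem_support, by simp [mVerts]⟩⟩

theorem exists_maximal_isAcyclicMatching [Finite V] (G : SimpleGraph V) :
    ∃ M, Maximal (IsAcyclicMatching G) M :=
  (Set.toFinite {M | IsAcyclicMatching G M}).exists_maximal ⟨∅, isAcyclicMatching_empty⟩

theorem two_le_card_filter_adj_add_card_filter_adj_of_maximal [DecidableEq V] [DecidableRel G.Adj]
    {M : Finset (Sym2 V)} (hM : Maximal (IsAcyclicMatching G) M) {S : Finset V}
    (hS : ↑S = mVerts M) {x y : V} (hxy : G.Adj x y) (hx : x ∉ S) (hy : y ∉ S) :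
    2 ≤ #{w ∈ S | G.Adj x w} + #{w ∈ S | G.Adj y w} := by
  by_contra! hlt
  wlog hy0 : #{w ∈ S | G.Adj y w} = 0 generalizing x y
  · exact this hxy.symm hy hx (by omega) (by omega)
  rw [← mem_coe, hS] at hx hy
  have hins : IsAcyclicMatching G (insert s(x, y) M) := by
    refine ⟨hM.prop.1.insert hxy hx hy, ?_⟩
    rw [mVerts_insert_mk]
    refine hM.prop.2.induce_insert_insert ?_ ?_ <;> rw [← hS]
    · have h := card_le_one_iff_subsingleton.mp (show #{w ∈ S | G.Adj x w} ≤ 1 by omega)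
      rwa [coe_filter] at h
    · have h := congrArg ((↑) : Finset V → Set V) (card_eq_zero.mp hy0)
      rwa [coe_filter, coe_empty] at h
  exact hx ⟨_, hM.2 hins (subset_insert _ _) (mem_insert_self _ _), Sym2.mem_mk_left x y⟩

end Matching

theorem acyclicMatching_lower_bound_edges_general {V : Type*} [Fintype V] (G : SimpleGraph V)
    [DecidableRel G.Adj] (Δ m : ℕ) (hm : G.edgeFinset.card = m)
    (hdeg : ∀ v : V, G.degree v ≤ Δ) :
    ∃ M : Finset (Sym2 V), IsAcyclicMatching G M ∧ (m : ℝ) / (Δ : ℝ) ^ 2 ≤ M.card := by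
  classical
  obtain ⟨M, hM⟩ := exists_maximal_isAcyclicMatching G
  set S := M.biUnion Sym2.toFinset
  have hS : ↑S = mVerts M := coe_biUnion_toFinset M
  have hmem (v : V) : v ∈ S ↔ v ∈ mVerts M := by rw [← mem_coe, hS]
  have hedges : 2 * m ≤ #S * Δ ^ 2 := hm ▸ two_mul_card_edgeFinset_le_card_mul_sq S hdeg
    (fun v hv => by
      obtain ⟨w, hw, hvw⟩ := hM.prop.1.exists_adj ((hmem v).mp hv)
      exact ⟨w, (hmem w).mpr hw, hvw⟩)
    fun x hx y hy hxy =>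
      two_le_card_filter_adj_add_card_filter_adj_of_maximal hM hS hxy hx hy
  have hS_card := Nat.mul_le_mul_right (Δ ^ 2) (card_biUnion_toFinset_le M)
  have hm_le : m ≤ #M * Δ ^ 2 := by linarith
  refine ⟨M, hM.prop, div_le_of_le_mul₀ (by positivity) (by positivity) ?_⟩
  exact_mod_cast hm_le

theorem acyclicMatching_lower_bound_edges {V : Type*} [Fintype V] (G : SimpleGraph V)
    [DecidableRel G.Adj] (Δ m : ℕ) (hΔ : 1 ≤ Δ) (hm : G.edgeFinset.card = m)
    (hdeg : ∀ v : V, G.degree v ≤ Δ) :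
    ∃ M : Finset (Sym2 V), IsAcyclicMatching G M ∧ (m : ℝ) / (Δ : ℝ) ^ 2 ≤ M.card :=
  acyclicMatching_lower_bound_edges_general G Δ m hm hdeg
end

section
/- Let G be the graph obtained by attaching ⌊Δ/2⌋ new pendant vertices to every vertex of a complete graph on ⌈Δ/2⌉ + 1 vertices. Then G has maximum degree Δ, has n = (⌈Δ/2⌉+1)(⌊Δ/2⌋+1) vertices, and its maximum induced matching has size exactly 1 = n/((⌊Δ/2⌋+1)(⌈Δ/2⌉+1)). -/
/-!
Every edge of the corona graph has an endpoint in the central clique. Hence two distinct edges of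
an induced matching would have distinct clique endpoints, which are adjacent; that edge would then
have to belong to the matching while meeting both edges, which is impossible. So induced matchings
have at most one edge, and any single edge is one. A clique vertex has `⌈Δ/2⌉` clique neighbours
and `⌊Δ/2⌋` pendant neighbours, in total `Δ`, while pendant vertices have degree `1`.
-/

open SimpleGraph

/-- The graph obtained by attaching `⌊Δ/2⌋` pendant vertices to every vertex of a
complete graph on `⌈Δ/2⌉ + 1` vertices. The vertex `(i, 0)` is the `i`-th clique vertex,
and `(i, j)` for `j ≠ 0` is a pendant vertex attached to `(i, 0)`. -/
def coronaGraph (Δ : ℕ) : SimpleGraph (Fin ((Δ + 1) / 2 + 1) × Fin (Δ / 2 + 1)) :=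
  SimpleGraph.fromRel (fun a b =>
    (a.2 : ℕ) = 0 ∧ (((b.2 : ℕ) = 0 ∧ a.1 ≠ b.1) ∨ (a.1 = b.1 ∧ (b.2 : ℕ) ≠ 0)))

open Finset

section InducedMatching

variable {V : Type*} {G : SimpleGraph V}

lemma isInducedMatching_singleton {v w : V} (h : G.Adj v w) : IsInducedMatching G {s(v, w)} := by
  refine ⟨⟨by simpa using h, fun e he f hf hne => by simp_all⟩, fun x y hx hy hxy => ?_⟩
  simp only [mVerts, mem_singleton, exists_eq_left, Sym2.mem_iff, Set.mem_ofPred_eq] at hx hy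
  rcases hx with rfl | rfl <;> rcases hy with rfl | rfl <;> simp_all [Sym2.eq_swap]

lemma IsInducedMatching.card_le_one_of_isClique {S : Set V} {M : Finset (Sym2 V)}
    (hM : IsInducedMatching G M) (hS : G.IsClique S) (hcover : ∀ e ∈ G.edgeSet, ∃ v ∈ e, v ∈ S) :
    M.card ≤ 1 := by
  obtain ⟨⟨hedge, hdisj⟩, hind⟩ := hM
  have eq_of_mem : ∀ e ∈ M, ∀ f ∈ M, ∀ v, v ∈ e → v ∈ f → e = f := fun e he f hf v hve hvf =>
    by_contra fun hne => hdisj e he f hf hne v hve hvf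
  refine card_le_one.2 fun e he f hf => ?_
  obtain ⟨u, hue, huS⟩ := hcover e (hedge e he)
  obtain ⟨w, hwf, hwS⟩ := hcover f (hedge f hf)
  by_cases huw : u = w
  · exact eq_of_mem e he f hf u hue (huw ▸ hwf)
  have huwM : s(u, w) ∈ M := hind u w ⟨e, he, hue⟩ ⟨f, hf, hwf⟩ (hS huS hwS huw)
  exact (eq_of_mem _ huwM e he u (Sym2.mem_mk_left u w) hue).symm.trans
    (eq_of_mem _ huwM f hf w (Sym2.mem_mk_right u w) hwf)

end InducedMatching

section Corona

variable {Δ : ℕ}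

lemma coronaGraph_adj {v w : Fin ((Δ + 1) / 2 + 1) × Fin (Δ / 2 + 1)} :
    (coronaGraph Δ).Adj v w ↔
      v ≠ w ∧ (v.2 = 0 ∨ w.2 = 0) ∧ (v.2 = 0 ∧ w.2 = 0 ∨ v.1 = w.1) := by
  obtain ⟨a, i⟩ := v
  obtain ⟨b, j⟩ := w
  simp only [coronaGraph, fromRel_adj, Fin.val_eq_zero_iff, ne_eq, Prod.ext_iff]
  grind

lemma coronaGraph_isClique : (coronaGraph Δ).IsClique {v | v.2 = 0} :=
  fun _ hv _ hw hvw => coronaGraph_adj.2 ⟨hvw, Or.inl hv, Or.inl ⟨hv, hw⟩⟩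

lemma coronaGraph_exists_snd_eq_zero_of_mem_edgeSet
    {e : Sym2 (Fin ((Δ + 1) / 2 + 1) × Fin (Δ / 2 + 1))} (he : e ∈ (coronaGraph Δ).edgeSet) :
    ∃ v ∈ e, v.2 = 0 := by
  induction e using Sym2.ind with
  | _ v w =>
    rcases (coronaGraph_adj.1 he).2.1 with h | h
    · exact ⟨v, Sym2.mem_mk_left v w, h⟩
    · exact ⟨w, Sym2.mem_mk_right v w, h⟩

lemma coronaGraph_neighborSet_of_snd_eq_zero (i : Fin ((Δ + 1) / 2 + 1)) :
    (coronaGraph Δ).neighborSet (i, 0) =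
      ↑((univ.erase i ×ˢ {0} ∪ {i} ×ˢ univ.erase 0 :
        Finset (Fin ((Δ + 1) / 2 + 1) × Fin (Δ / 2 + 1)))) := by
  ext ⟨a, j⟩
  simp only [mem_neighborSet, coronaGraph_adj, coe_union, coe_product, coe_erase, coe_univ,
    coe_singleton, Set.mem_union, Set.mem_prod, Set.mem_sdiff, Set.mem_univ,
    Set.mem_singleton_iff, ne_eq, Prod.ext_iff]
  tauto

lemma coronaGraph_neighborSet_of_snd_ne_zero {i : Fin ((Δ + 1) / 2 + 1)} {j : Fin (Δ / 2 + 1)}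
    (hj : j ≠ 0) : (coronaGraph Δ).neighborSet (i, j) = {(i, 0)} := by
  ext ⟨a, k⟩
  simp only [mem_neighborSet, coronaGraph_adj, Set.mem_singleton_iff, ne_eq, Prod.ext_iff]
  grind

lemma coronaGraph_ncard_neighborSet_of_snd_eq_zero (i : Fin ((Δ + 1) / 2 + 1)) :
    ((coronaGraph Δ).neighborSet (i, 0)).ncard = Δ := by
  rw [coronaGraph_neighborSet_of_snd_eq_zero, Set.ncard_coe_finset, card_union_of_disjoint
    (disjoint_product.2 (Or.inr (by simp))), card_product, card_product]
  simp only [card_erase_of_mem (mem_univ _), card_univ, Fintype.card_fin, card_singleton]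
  omega

lemma coronaGraph_ncard_neighborSet_le (hΔ : 1 ≤ Δ) (v : Fin ((Δ + 1) / 2 + 1) × Fin (Δ / 2 + 1)) :
    ((coronaGraph Δ).neighborSet v).ncard ≤ Δ := by
  obtain ⟨i, j⟩ := v
  by_cases hj : j = 0
  · exact hj ▸ (coronaGraph_ncard_neighborSet_of_snd_eq_zero i).le
  · rwa [coronaGraph_neighborSet_of_snd_ne_zero hj, Set.ncard_singleton]

lemma coronaGraph_adj_pendant (i : Fin ((Δ + 1) / 2 + 1)) {j : Fin (Δ / 2 + 1)} (hj : j ≠ 0) :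
    (coronaGraph Δ).Adj (i, 0) (i, j) :=
  coronaGraph_adj.2 ⟨by simpa [Prod.ext_iff, eq_comm] using hj, Or.inl rfl, Or.inr rfl⟩

end Corona

theorem corona_extremal (Δ : ℕ) (hΔ : 2 ≤ Δ) :
    (∀ v, ((coronaGraph Δ).neighborSet v).ncard ≤ Δ) ∧
      (∃ v, ((coronaGraph Δ).neighborSet v).ncard = Δ) ∧
      Fintype.card (Fin ((Δ + 1) / 2 + 1) × Fin (Δ / 2 + 1)) =
        ((Δ + 1) / 2 + 1) * (Δ / 2 + 1) ∧
      (∃ M, IsInducedMatching (coronaGraph Δ) M ∧ M.card = 1) ∧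
      (∀ M, IsInducedMatching (coronaGraph Δ) M → M.card ≤ 1) := by
  have hpendant : (⟨1, by omega⟩ : Fin (Δ / 2 + 1)) ≠ 0 := by simp [Fin.ext_iff]
  refine ⟨coronaGraph_ncard_neighborSet_le (by omega),
    ⟨(0, 0), coronaGraph_ncard_neighborSet_of_snd_eq_zero 0⟩, by simp,
    ⟨_, isInducedMatching_singleton (coronaGraph_adj_pendant 0 hpendant), card_singleton _⟩,
    fun M hM => hM.card_le_one_of_isClique coronaGraph_isClique
      fun _ => coronaGraph_exists_snd_eq_zero_of_mem_edgeSet⟩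
end
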